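/- arXiv:1407.1132 — 4 statements merged into one kernel-verified Lean document; each statement's English description precedes it below -/
import Mathlib

section
/- For every positive integer n and every j with 0 ≤ j ≤ n−1, the j-fold iterate of ϑ applied to the n-th Euler polynomial is given explicitly by ϑ^j 𝓔_n(t) = ∑_{i=1}^{n−j} (−1)^{i+1} (n+1 choose n−j−i) t^i in ℤ[t]. -/
/-!
`ϑ` negates the coefficients and shifts them down by one degree, discarding the linear term, so
on polynomials `∑_{i=1}^m c_i t^i` it acts by `c_i ↦ -c_{i+1}`. After reindexing `k ↦ n - k`,
the Euler polynomial `𝓔_n` has this shape with `c_i = (-1)^(i+1) (n+1 choose n-i)`, and each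
application of `ϑ` replaces `n - i` by `n - 1 - i`.
-/

open Polynomial

/-- The `n`-th Euler polynomial `𝓔_n(t) = −∑_{k=0}^{n−1} (n+1 choose k)(−t)^{n−k} ∈ ℤ[t]`. -/
noncomputable def eulerPoly (n : ℕ) : Polynomial ℤ :=
  -(∑ k ∈ Finset.range n, C (((n + 1).choose k : ℤ)) * (-X) ^ (n - k))

/-- The map `ϑ : R[t] → R[t]` that discards the terms of degree `≤ 1` of a polynomial and
divides the result by `−t`: `(ϑ p).coeff 0 = 0` and `(ϑ p).coeff k = −(p.coeff (k+1))`
for `k ≥ 1`. -/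
noncomputable def theta {R : Type*} [CommRing R] (p : Polynomial R) : Polynomial R :=
  -(p.divX.divX * X)

section

variable {R : Type*} [CommRing R]

lemma coeff_theta (p : R[X]) (k : ℕ) :
    (theta p).coeff k = if k = 0 then 0 else -p.coeff (k + 1) := by
  cases k with
  | zero => simp [theta]
  | succ k => simp [theta, coeff_divX]

lemma coeff_sum_Icc_C_mul_X_pow (m : ℕ) (c : ℕ → R) (k : ℕ) :
    (∑ i ∈ Finset.Icc 1 m, C (c i) * X ^ i).coeff k =
      if k ∈ Finset.Icc 1 m then c k else 0 := by
  simp only [finsetSum_coeff, coeff_C_mul_X_pow, Finset.sum_ite_eq]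

lemma theta_sum_Icc_C_mul_X_pow (m : ℕ) (c : ℕ → R) :
    theta (∑ i ∈ Finset.Icc 1 m, C (c i) * X ^ i) =
      ∑ i ∈ Finset.Icc 1 (m - 1), C (-c (i + 1)) * X ^ i := by
  ext k
  simp only [coeff_theta, coeff_sum_Icc_C_mul_X_pow, Finset.mem_Icc]
  split_ifs <;> first | (exfalso; omega) | simp

end

lemma eulerPoly_eq_sum_Icc (n : ℕ) :
    eulerPoly n = ∑ i ∈ Finset.Icc 1 n,
        C ((-1 : ℤ) ^ (i + 1) * ((n + 1).choose (n - i) : ℤ)) * X ^ i := by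
  rw [eulerPoly, ← Finset.sum_neg_distrib]
  refine Finset.sum_nbij' (n - ·) (n - ·) ?_ ?_ ?_ ?_ ?_
  iterate 4 (intro k hk; simp only [Finset.mem_range, Finset.mem_Icc] at hk ⊢; omega)
  intro k hk
  rw [Finset.mem_range] at hk
  rw [Nat.sub_sub_self hk.le, neg_pow, C_mul, C_pow, C_neg, C_1]
  ring

theorem theta_iterate_eulerPoly_general (n j : ℕ) :
    theta^[j] (eulerPoly n) =
      ∑ i ∈ Finset.Icc 1 (n - j),
        C ((-1 : ℤ) ^ (i + 1) * ((n + 1).choose (n - j - i) : ℤ)) * X ^ i := by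
  induction j with
  | zero => exact eulerPoly_eq_sum_Icc n
  | succ j ih =>
    rw [Function.iterate_succ_apply', ih, theta_sum_Icc_C_mul_X_pow, Nat.sub_sub]
    refine Finset.sum_congr rfl fun i hi => ?_
    rw [Finset.mem_Icc] at hi
    rw [show n - j - (i + 1) = n - (j + 1) - i by omega]
    congr 2
    ring

/-- For every positive integer `n` and `0 ≤ j ≤ n−1`,
`ϑ^j 𝓔_n(t) = ∑_{i=1}^{n−j} (−1)^{i+1} (n+1 choose n−j−i) t^i` in `ℤ[t]`. -/
theorem theta_iterate_eulerPoly (n j : ℕ) (hn : 0 < n) (hj : j ≤ n - 1) :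
    theta^[j] (eulerPoly n) =
      ∑ i ∈ Finset.Icc 1 (n - j),
        C ((-1 : ℤ) ^ (i + 1) * ((n + 1).choose (n - j - i) : ℤ)) * X ^ i :=
  theta_iterate_eulerPoly_general n j
end

section
/- For every positive integer n, ϑ^{n−1} 𝓔_n(t) = t, and consequently ϑ^{n} 𝓔_n(t) = 0, in ℤ[t]. -/
/-!
On polynomials written in powers of `-t`, `ϑ` lowers every exponent by one and kills the
exponents `0` and `1`: `ϑ (c (-t)^(e+2)) = c (-t)^(e+1)` and `ϑ (c (-t)) = 0`. Since
`𝓔_n = -∑_{k<n} (n+1 choose k) (-t)^(n-k)`, applying `ϑ` `n - 1` times leaves only the term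
`k = 0`, namely `-(-t) = t`, and one more application gives `ϑ t = 0`.
-/

open Polynomial

section

variable {R : Type*} [CommRing R]

theorem Polynomial.divX_mul_X (p : R[X]) : (p * X).divX = p := by
  ext n
  rw [coeff_divX, coeff_mul_X]

theorem theta_add (p q : R[X]) : theta (p + q) = theta p + theta q := by
  rw [theta, theta, theta, divX_add, divX_add, add_mul, neg_add]

noncomputable def thetaAddHom : R[X] →+ R[X] :=
  AddMonoidHom.mk' theta theta_add

theorem coe_thetaAddHom : ⇑(thetaAddHom : R[X] →+ R[X]) = theta := rfl

theorem theta_sum {ι : Type*} (s : Finset ι) (f : ι → R[X]) :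
    theta (∑ i ∈ s, f i) = ∑ i ∈ s, theta (f i) :=
  map_sum thetaAddHom f s

theorem theta_C_mul_neg_X_pow_add_two (c : R) (e : ℕ) :
    theta (C c * (-X) ^ (e + 2)) = C c * (-X) ^ (e + 1) := by
  have h : C c * (-X) ^ (e + 2) = C c * (-X) ^ e * X * X := by ring
  rw [theta, h, divX_mul_X, divX_mul_X]
  ring

theorem theta_C_mul_neg_X (c : R) : theta (C c * -X) = 0 := by
  rw [theta, show C c * -X = C (-c) * X by rw [C_neg, neg_mul_comm], divX_mul_X, divX_C,
    zero_mul, neg_zero]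

theorem theta_X : theta (X : R[X]) = 0 := by
  simpa using theta_C_mul_neg_X (-1 : R)

noncomputable def negXPowSum (f : ℕ → R) (m : ℕ) : R[X] :=
  ∑ k ∈ Finset.range m, C (f k) * (-X) ^ (m - k)

theorem negXPowSum_one (f : ℕ → R) : negXPowSum f 1 = -(C (f 0) * X) := by
  simp [negXPowSum]

theorem theta_negXPowSum_succ (f : ℕ → R) (m : ℕ) :
    theta (negXPowSum f (m + 1)) = negXPowSum f m := by
  rw [negXPowSum, theta_sum, Finset.sum_range_succ, Nat.add_sub_cancel_left, pow_one,
    theta_C_mul_neg_X, add_zero]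
  refine Finset.sum_congr rfl fun k hk => ?_
  have hk : k < m := Finset.mem_range.mp hk
  rw [show m + 1 - k = m - 1 - k + 2 by omega, theta_C_mul_neg_X_pow_add_two,
    show m - 1 - k + 1 = m - k by omega]

theorem theta_iterate_negXPowSum (f : ℕ → R) (m j : ℕ) :
    theta^[j] (negXPowSum f (j + m)) = negXPowSum f m := by
  induction j with
  | zero => rw [Nat.zero_add, Function.iterate_zero_apply]
  | succ j ih => rw [Function.iterate_succ_apply, Nat.add_right_comm, theta_negXPowSum_succ, ih]

end

theorem eulerPoly_eq_neg_negXPowSum (n : ℕ) :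
    eulerPoly n = -negXPowSum (fun k => ((n + 1).choose k : ℤ)) n := rfl

/-- For every positive integer `n`, `ϑ^{n−1} 𝓔_n(t) = t` and `ϑ^{n} 𝓔_n(t) = 0` in `ℤ[t]`. -/
theorem theta_iterate_eulerPoly_top (n : ℕ) (hn : 0 < n) :
    theta^[n - 1] (eulerPoly n) = X ∧ theta^[n] (eulerPoly n) = 0 := by
  obtain ⟨m, rfl⟩ : ∃ m, n = m + 1 := ⟨n - 1, by omega⟩
  have htop : theta^[m] (eulerPoly (m + 1)) = X := by
    rw [eulerPoly_eq_neg_negXPowSum, ← coe_thetaAddHom, iterate_map_neg, coe_thetaAddHom,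
      theta_iterate_negXPowSum, negXPowSum_one]
    simp
  refine ⟨htop, ?_⟩
  rw [Function.iterate_succ_apply', htop, theta_X]
end

section
/- For every positive integer n and every q with 1 ≤ q ≤ n, the coefficient of s^q in the formal power series (1+s)^{n+1} · (t·s) · (1 + t·s)^{−1} ∈ (ℤ[t])[[s]] equals ϑ^{n−q} 𝓔_n(t). That is, the total Fulton/Chern class (1+H)^{n+1}·dH/(1+dH) of a degree-d hypersurface in ℙ^n has codimension-q part given by evaluating ϑ^{n−q}𝓔_n at d. -/
/-!
Let `G_q(t)` be the coefficient of `s ^ q` in `(1 + s)^(n+1) t s / (1 + t s)`. Since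
`t s / (1 + t s) = 1 - (1 + t s)⁻¹` and `(1 + t s)⁻¹ = ∑ (-t)^k s^k`, one gets
`G_q = -∑_{j<q} (n+1 choose j) (-t)^(q-j)`, so `G_n = 𝓔_n`. Moreover `G_{q+1} = t · S_q` with
`S_q = ∑_{j≤q} (n+1 choose j) (-t)^(q-j)`, whose constant term is `(n+1 choose q)`; as
`ϑ (t r) = r(0) - r`, this gives `ϑ G_{q+1} = G_q`, and iterating `n - q` times from `G_n = 𝓔_n`
yields the claim.
-/

open Polynomial

namespace PowerSeries

variable {R : Type*} [CommRing R]

theorem invOfUnit_one_add_C_mul_X (a : R) :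
    invOfUnit (1 + C a * X) 1 = mk fun k => (-a) ^ k := by
  refine left_inv_eq_right_inv (invOfUnit_mul (1 + C a * X) 1 (by simp)) ?_
  have h := congrArg (rescale (-a)) (mk_one_mul_one_sub_eq_one R)
  rw [map_mul, rescale_mk, map_sub, map_one, rescale_X, map_neg, neg_mul, sub_neg_eq_add] at h
  simpa [mul_comm] using h

theorem C_mul_X_mul_invOfUnit_one_add (a : R) :
    C a * X * invOfUnit (1 + C a * X) 1 = 1 - invOfUnit (1 + C a * X) 1 := by
  rw [eq_sub_iff_add_eq', ← one_add_mul, mul_invOfUnit _ _ (by simp)]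

theorem coeff_one_add_X_pow (m q : ℕ) :
    coeff q ((1 + X : R⟦X⟧) ^ m) = m.choose q := by
  rw [← Polynomial.coe_X, ← Polynomial.coe_one, ← Polynomial.coe_add, ← Polynomial.coe_pow,
    Polynomial.coeff_coe, Polynomial.coeff_one_add_X_pow]

theorem coeff_one_add_X_pow_mul_invOfUnit (a : R) (m q : ℕ) :
    coeff q ((1 + X) ^ m * invOfUnit (1 + C a * X) 1) =
      ∑ j ∈ Finset.range (q + 1), (m.choose j : R) * (-a) ^ (q - j) := by
  rw [invOfUnit_one_add_C_mul_X, coeff_mul, Finset.Nat.sum_antidiagonal_eq_sum_range_succ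
    (fun i k => coeff i ((1 + X : R⟦X⟧) ^ m) * coeff k (mk fun k => (-a) ^ k))]
  simp only [coeff_one_add_X_pow, coeff_mk]

theorem coeff_one_add_X_pow_mul_C_mul_X_mul_invOfUnit (a : R) (m q : ℕ) :
    coeff q ((1 + X) ^ m * (C a * X) * invOfUnit (1 + C a * X) 1) =
      -∑ j ∈ Finset.range q, (m.choose j : R) * (-a) ^ (q - j) := by
  rw [mul_assoc, C_mul_X_mul_invOfUnit_one_add, mul_sub, mul_one, map_sub,
    coeff_one_add_X_pow, coeff_one_add_X_pow_mul_invOfUnit, Finset.sum_range_succ]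
  simp

end PowerSeries

theorem theta_X_mul {R : Type*} [CommRing R] (r : R[X]) : theta (X * r) = C (r.coeff 0) - r := by
  have divX_X_mul : (X * r).divX = r := by ext; simp [coeff_divX]
  rw [theta, divX_X_mul]
  linear_combination -(divX_mul_X_add r)

/-- The coefficient of `s ^ q` in `(1 + s) ^ m * (t s) * (1 + t s)⁻¹`. -/
noncomputable def fultonPoly (R : Type*) [CommRing R] (m q : ℕ) : R[X] :=
  -∑ j ∈ Finset.range q, (m.choose j : R[X]) * (-X) ^ (q - j)

section FultonPoly

variable {R : Type*} [CommRing R]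

theorem fultonPoly_succ (m q : ℕ) :
    fultonPoly R m (q + 1) =
      X * ∑ j ∈ Finset.range (q + 1), (m.choose j : R[X]) * (-X) ^ (q - j) := by
  rw [fultonPoly, Finset.mul_sum, ← Finset.sum_neg_distrib]
  refine Finset.sum_congr rfl fun j hj => ?_
  rw [Nat.sub_add_comm (Nat.lt_succ_iff.mp (Finset.mem_range.mp hj)), pow_succ]
  ring

theorem sum_range_succ_choose_mul_neg_X_pow (m q : ℕ) :
    ∑ j ∈ Finset.range (q + 1), (m.choose j : R[X]) * (-X) ^ (q - j) =
      m.choose q - fultonPoly R m q := by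
  rw [fultonPoly, Finset.sum_range_succ, Nat.sub_self, pow_zero, mul_one]
  ring

theorem coeff_zero_fultonPoly (m q : ℕ) : (fultonPoly R m q).coeff 0 = 0 := by
  cases q with
  | zero => simp [fultonPoly]
  | succ q => rw [fultonPoly_succ, coeff_X_mul_zero]

theorem theta_fultonPoly_succ (m q : ℕ) : theta (fultonPoly R m (q + 1)) = fultonPoly R m q := by
  rw [fultonPoly_succ, theta_X_mul, sum_range_succ_choose_mul_neg_X_pow, coeff_sub,
    coeff_zero_fultonPoly, sub_zero, ← map_natCast C, coeff_C_zero, sub_sub_cancel]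

theorem theta_iterate_fultonPoly {p q : ℕ} (m : ℕ) (h : q ≤ p) :
    theta^[p - q] (fultonPoly R m p) = fultonPoly R m q := by
  obtain ⟨k, rfl⟩ := Nat.exists_eq_add_of_le h
  rw [Nat.add_sub_cancel_left]
  clear h
  induction k with
  | zero => rfl
  | succ k ih => rw [Function.iterate_succ_apply, ← add_assoc, theta_fultonPoly_succ, ih]

end FultonPoly

theorem eulerPoly_eq_fultonPoly (n : ℕ) : eulerPoly n = fultonPoly ℤ (n + 1) n := by
  simp only [eulerPoly, fultonPoly, map_natCast]

theorem coeff_fulton_class_eq_theta_iterate_eulerPoly_general (n q : ℕ) (hqn : q ≤ n) :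
    PowerSeries.coeff (R := Polynomial ℤ) q
      ((1 + PowerSeries.X) ^ (n + 1) *
          (PowerSeries.C (R := Polynomial ℤ) X * PowerSeries.X) *
        PowerSeries.invOfUnit (1 + PowerSeries.C (R := Polynomial ℤ) X * PowerSeries.X) 1) =
      theta^[n - q] (eulerPoly n) := by
  rw [eulerPoly_eq_fultonPoly, theta_iterate_fultonPoly _ hqn]
  exact PowerSeries.coeff_one_add_X_pow_mul_C_mul_X_mul_invOfUnit X (n + 1) q

/-- For every positive integer `n` and `1 ≤ q ≤ n`, the coefficient of `s^q` in the
formal power series `(1+s)^{n+1} · (t·s) · (1 + t·s)^{−1} ∈ (ℤ[t])⟦s⟧` equals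
`ϑ^{n−q} 𝓔_n(t)`.  Here `t` denotes `Polynomial.X : ℤ[t]` and the inverse of `1 + t·s`
(a power series with constant term `1`) is `invOfUnit _ 1`. -/
theorem coeff_fulton_class_eq_theta_iterate_eulerPoly (n q : ℕ) (hn : 0 < n)
    (hq1 : 1 ≤ q) (hqn : q ≤ n) :
    PowerSeries.coeff (R := Polynomial ℤ) q
      ((1 + PowerSeries.X) ^ (n + 1) *
          (PowerSeries.C (R := Polynomial ℤ) X * PowerSeries.X) *
        PowerSeries.invOfUnit (1 + PowerSeries.C (R := Polynomial ℤ) X * PowerSeries.X) 1) =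
      theta^[n - q] (eulerPoly n) :=
  coeff_fulton_class_eq_theta_iterate_eulerPoly_general n q hqn
end

section
/- For every positive integer n, the following identity holds in ℤ[s,t]: s·𝔠_n^∨(−s−1, t) + 𝔠_n^∨(0, t) = (s+1)·( 𝓔_n(t) + ∑_{j=1}^{n−1} (−1)^j (ϑ^j 𝓔_n)(t) · s·(s+1)^{j−1} ). Equivalently, 𝔢_n(s,t) = 𝓔_n(t) + ∑_{j=1}^{n−1} (−1)^j (ϑ^j 𝓔_n)(t) · s·(s+1)^{j−1}, so the coefficient of s^r in 𝔢_n(s,t) for r ≥ 1 is ∑_{j=r}^{n−1} (−1)^j (j−1 choose r−1) (ϑ^j 𝓔_n)(t). -/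
/-!
Substituting `s ↦ -s - 1` turns `s ^ j` into `(-1) ^ j (s + 1) ^ j`, so for `j ≥ 1` the `j`-th term
of `s · 𝔠_n^∨(-s-1, t)` is `(s + 1) · (-1) ^ j (ϑ^j 𝓔_n) · s (s + 1) ^ (j - 1)`, while its `j = 0`
term `s · 𝓔_n` combines with `𝔠_n^∨(0, t) = 𝓔_n` into `(s + 1) · 𝓔_n`. The coefficient formula is
the binomial expansion of `s (s + 1) ^ (j - 1)`. Nothing depends on the coefficients `ϑ^j 𝓔_n`
themselves.
-/

open Polynomial

/-- `𝔠_n^∨(s,t) = ∑_{j=0}^{n−1} (ϑ^j 𝓔_n)(t) · s^j`, as a polynomial in `s` over `ℤ[t]`. -/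
noncomputable def cDual (n : ℕ) : Polynomial (Polynomial ℤ) :=
  ∑ j ∈ Finset.range n, C (theta^[j] (eulerPoly n)) * X ^ j

theorem Finset.sum_range_eq_add_sum_Icc {M : Type*} [AddCommMonoid M] {n : ℕ} (hn : 0 < n)
    (f : ℕ → M) : ∑ j ∈ Finset.range n, f j = f 0 + ∑ j ∈ Finset.Icc 1 (n - 1), f j := by
  rw [Nat.range_eq_Icc_zero_sub_one n hn.ne',
    ← Finset.insert_Icc_add_one_left_eq_Icc (Nat.zero_le _),
    Finset.sum_insert (by simp), zero_add]

namespace Polynomial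

variable {R : Type*} [CommRing R]

theorem eval_zero_sum_C_mul_X_pow {n : ℕ} (hn : 0 < n) (a : ℕ → R) :
    (∑ j ∈ Finset.range n, C (a j) * X ^ j).eval 0 = a 0 := by
  simp [eval_finsetSum, Finset.sum_range_eq_add_sum_Icc hn, zero_pow_eq]

theorem X_mul_C_mul_neg_X_sub_one_pow (c : R) {j : ℕ} (hj : 1 ≤ j) :
    X * (C c * (-X - 1) ^ j) = (X + 1) * (C ((-1) ^ j * c) * (X * (X + 1) ^ (j - 1))) := by
  obtain ⟨i, rfl⟩ := Nat.exists_eq_add_of_le' hj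
  rw [show (-X - 1 : R[X]) = -(X + 1) by ring, neg_pow, C_mul, C_pow, C_neg, C_1,
    Nat.add_sub_cancel]
  ring

theorem X_mul_comp_neg_X_sub_one_add_C_eval_zero {n : ℕ} (hn : 0 < n) (a : ℕ → R) :
    X * (∑ j ∈ Finset.range n, C (a j) * X ^ j).comp (-X - 1) +
        C ((∑ j ∈ Finset.range n, C (a j) * X ^ j).eval 0) =
      (X + 1) * (C (a 0) +
        ∑ j ∈ Finset.Icc 1 (n - 1), C ((-1) ^ j * a j) * (X * (X + 1) ^ (j - 1))) := by
  have hsum : ∑ j ∈ Finset.Icc 1 (n - 1), X * (C (a j) * (-X - 1) ^ j) =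
      ∑ j ∈ Finset.Icc 1 (n - 1), (X + 1) * (C ((-1) ^ j * a j) * (X * (X + 1) ^ (j - 1))) :=
    Finset.sum_congr rfl fun j hj => X_mul_C_mul_neg_X_sub_one_pow _ (Finset.mem_Icc.mp hj).1
  rw [eval_zero_sum_C_mul_X_pow hn, sum_comp, Finset.sum_range_eq_add_sum_Icc hn, mul_add X,
    Finset.mul_sum]
  simp only [mul_comp, C_comp, X_pow_comp, hsum]
  rw [mul_add (X + 1), Finset.mul_sum]
  ring

theorem coeff_X_mul_X_add_one_pow (m : ℕ) {r : ℕ} (hr : 1 ≤ r) :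
    (X * (X + 1) ^ m : R[X]).coeff r = (m.choose (r - 1) : R) := by
  obtain ⟨k, rfl⟩ := Nat.exists_eq_add_of_le' hr
  rw [coeff_X_mul, coeff_X_add_one_pow, Nat.add_sub_cancel]

theorem coeff_C_add_sum_C_mul_X_mul_X_add_one_pow (c : R) (b : ℕ → R) (m : ℕ) {r : ℕ}
    (hr : 1 ≤ r) :
    (C c + ∑ j ∈ Finset.Icc 1 m, C (b j) * (X * (X + 1) ^ (j - 1))).coeff r =
      ∑ j ∈ Finset.Icc r m, b j * ((j - 1).choose (r - 1) : R) := by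
  simp only [coeff_add, coeff_C, if_neg (by omega : r ≠ 0), zero_add, finsetSum_coeff,
    coeff_C_mul, coeff_X_mul_X_add_one_pow _ hr]
  symm
  apply Finset.sum_subset (Finset.Icc_subset_Icc_left hr)
  intro j hj hjr
  simp only [Finset.mem_Icc] at hj hjr
  rw [Nat.choose_eq_zero_of_lt (by omega), Nat.cast_zero, mul_zero]

end Polynomial

/-- For every positive integer `n`:
`s·𝔠_n^∨(−s−1, t) + 𝔠_n^∨(0, t)
   = (s+1)·(𝓔_n(t) + ∑_{j=1}^{n−1} (−1)^j (ϑ^j 𝓔_n)(t) · s·(s+1)^{j−1})`,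
and the coefficient of `s^r` (for `r ≥ 1`) in the second factor `𝔢_n(s,t)` is
`∑_{j=r}^{n−1} (−1)^j (j−1 choose r−1) (ϑ^j 𝓔_n)(t)`. -/
theorem e_poly_identity (n : ℕ) (hn : 0 < n) :
    X * (cDual n).comp (-X - 1) + C ((cDual n).eval 0) =
      (X + 1) *
        (C (eulerPoly n) +
          ∑ j ∈ Finset.Icc 1 (n - 1),
            C ((-1 : Polynomial ℤ) ^ j * theta^[j] (eulerPoly n)) *
              (X * (X + 1) ^ (j - 1))) ∧
    ∀ r : ℕ, 1 ≤ r →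
      (C (eulerPoly n) +
          ∑ j ∈ Finset.Icc 1 (n - 1),
            C ((-1 : Polynomial ℤ) ^ j * theta^[j] (eulerPoly n)) *
              (X * (X + 1) ^ (j - 1))).coeff r =
        ∑ j ∈ Finset.Icc r (n - 1),
          (-1 : Polynomial ℤ) ^ j * (((j - 1).choose (r - 1) : Polynomial ℤ)) *
            theta^[j] (eulerPoly n) := by
  refine ⟨X_mul_comp_neg_X_sub_one_add_C_eval_zero hn (theta^[·] (eulerPoly n)), fun r hr => ?_⟩
  rw [coeff_C_add_sum_C_mul_X_mul_X_add_one_pow _ _ _ hr]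
  exact Finset.sum_congr rfl fun j _ => by ring
end
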